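/- arXiv:1201.5685 — 6 statements merged into one kernel-verified Lean document; each statement's English description precedes it below -/
import Mathlib

section
/- Let E = EuclideanSpace ℝ (Fin n), let f : E → ℝ be twice continuously differentiable, let ℏ ≠ 0 and m² be real constants, and suppose Δf(x) = 0 and ‖∇f(x)‖² = m² for all x ∈ E. Then ψ = (fun x => Complex.exp (Complex.I * f x / ℏ)) satisfies the Klein–Gordon equation Δψ(x) + (m²/ℏ²) * ψ(x) = 0 for all x. (Paper's Proposition 5.2: conservative geodesic fields satisfy the Klein–Gordon equation; Euclidean metric case.) -/
/-- The Laplacian of a function on `EuclideanSpace ℝ (Fin n)` with values in a real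
normed space: the sum of the second derivatives along the standard orthonormal basis. -/
noncomputable def eLap {n : ℕ} {V : Type*} [NormedAddCommGroup V] [NormedSpace ℝ V]
    (g : EuclideanSpace ℝ (Fin n) → V) (x : EuclideanSpace ℝ (Fin n)) : V :=
  ∑ i, fderiv ℝ (fun y => fderiv ℝ g y (EuclideanSpace.single i 1)) x (EuclideanSpace.single i 1)

/-!
Writing `ψ = φ ∘ f` with `φ t = exp (i t / ℏ)`, the chain rule for the Laplacian gives
`Δψ = φ'(f) Δf + φ''(f) ‖∇f‖² = (i/ℏ) ψ Δf - ψ ‖∇f‖² / ℏ²`, and the two hypotheses turn this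
into `-(m²/ℏ²) ψ`.
-/

open InnerProductSpace

section ChainRule

variable {V : Type*} [NormedAddCommGroup V] [NormedSpace ℝ V]

theorem fderiv_comp_apply_eq_smul_deriv {F : Type*} [NormedAddCommGroup F] [NormedSpace ℝ F]
    {φ : ℝ → V} {f : F → ℝ} {y : F} (hφ : DifferentiableAt ℝ φ (f y))
    (hf : DifferentiableAt ℝ f y) (v : F) :
    fderiv ℝ (φ ∘ f) y v = fderiv ℝ f y v • deriv φ (f y) := by
  rw [(hφ.hasDerivAt.hasFDerivAt.comp y hf.hasFDerivAt).fderiv]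
  rfl

variable {n : ℕ}

theorem fderiv_apply_single_eq_gradient (f : EuclideanSpace ℝ (Fin n) → ℝ)
    (x : EuclideanSpace ℝ (Fin n)) (i : Fin n) :
    fderiv ℝ f x (EuclideanSpace.single i 1) = gradient f x i := by
  rw [← toDual_gradient, toDual_apply_apply, EuclideanSpace.inner_single_right]
  simp

theorem sum_sq_fderiv_apply_single (f : EuclideanSpace ℝ (Fin n) → ℝ)
    (x : EuclideanSpace ℝ (Fin n)) :
    ∑ i, fderiv ℝ f x (EuclideanSpace.single i 1) ^ 2 = ‖gradient f x‖ ^ 2 := by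
  simp only [fderiv_apply_single_eq_gradient, EuclideanSpace.real_norm_sq_eq]

theorem eLap_comp {φ : ℝ → V} {f : EuclideanSpace ℝ (Fin n) → ℝ} (hφ : ContDiff ℝ 2 φ)
    (hf : ContDiff ℝ 2 f) (x : EuclideanSpace ℝ (Fin n)) :
    eLap (φ ∘ f) x = eLap f x • deriv φ (f x) + ‖gradient f x‖ ^ 2 • deriv (deriv φ) (f x) := by
  have hφ' : Differentiable ℝ (deriv φ) :=
    ((contDiff_succ_iff_deriv (n := 1)).mp hφ).2.2.differentiable one_ne_zero
  have hf₁ : Differentiable ℝ f := hf.differentiable two_ne_zero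
  unfold eLap
  rw [← sum_sq_fderiv_apply_single, Finset.sum_smul, Finset.sum_smul, ← Finset.sum_add_distrib]
  refine Finset.sum_congr rfl fun i _ => ?_
  set e := EuclideanSpace.single (𝕜 := ℝ) i (1 : ℝ)
  have hpartial : Differentiable ℝ fun y => fderiv ℝ f y e :=
    ((hf.fderiv_right (m := 1) one_add_one_eq_two.le).clm_apply contDiff_const).differentiable
      one_ne_zero
  have hcomp : (fun y => fderiv ℝ (φ ∘ f) y e) = fun y => fderiv ℝ f y e • (deriv φ ∘ f) y :=
    funext fun y => fderiv_comp_apply_eq_smul_deriv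
      (hφ.differentiable two_ne_zero _) (hf₁ y) e
  rw [hcomp, fderiv_fun_smul (hpartial x) ((hφ' _).comp x (hf₁ x))]
  simp only [add_apply, smul_apply, ContinuousLinearMap.smulRight_apply,
    fderiv_comp_apply_eq_smul_deriv (hφ' _) (hf₁ x), Function.comp_apply, smul_smul, sq]
  rw [add_comm]

end ChainRule

theorem hasDerivAt_cexp_mul_ofReal (c : ℂ) (t : ℝ) :
    HasDerivAt (fun s : ℝ => Complex.exp (c * s)) (c * Complex.exp (c * t)) t := by
  simpa [mul_comm] using (((hasDerivAt_id (t : ℂ)).const_mul c).cexp).comp_ofReal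

theorem contDiff_cexp_mul_ofReal (c : ℂ) {k : WithTop ℕ∞} :
    ContDiff ℝ k fun s : ℝ => Complex.exp (c * s) :=
  Complex.contDiff_exp.comp (contDiff_const.mul Complex.ofRealCLM.contDiff)

theorem deriv_deriv_cexp_mul_ofReal (c : ℂ) (t : ℝ) :
    deriv (deriv fun s : ℝ => Complex.exp (c * s)) t = c ^ 2 * Complex.exp (c * t) := by
  have hderiv : deriv (fun s : ℝ => Complex.exp (c * s)) = fun s : ℝ => c * Complex.exp (c * s) :=
    funext fun s => (hasDerivAt_cexp_mul_ofReal c s).deriv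
  rw [hderiv, ((hasDerivAt_cexp_mul_ofReal c t).const_mul c).deriv, sq, mul_assoc]

theorem kleinGordon_of_conservative_geodesic_general {n : ℕ}
    (f : EuclideanSpace ℝ (Fin n) → ℝ) (hf : ContDiff ℝ 2 f)
    (ℏ m2 : ℝ)
    (hlap : ∀ x, eLap f x = 0)
    (hgrad : ∀ x, ‖gradient f x‖ ^ 2 = m2)
    (x : EuclideanSpace ℝ (Fin n)) :
    eLap (fun y => Complex.exp (Complex.I * (f y : ℂ) / (ℏ : ℂ))) x
      + ((m2 / ℏ ^ 2 : ℝ) : ℂ) * Complex.exp (Complex.I * (f x : ℂ) / (ℏ : ℂ)) = 0 := by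
  have hc : (Complex.I / ℏ) ^ 2 = -((ℏ : ℂ) ^ 2)⁻¹ := by
    rw [div_pow, Complex.I_sq]
    ring
  simp_rw [mul_div_right_comm Complex.I]
  rw [show (fun y => Complex.exp (Complex.I / ℏ * f y))
      = (fun t : ℝ => Complex.exp (Complex.I / ℏ * t)) ∘ f from rfl,
    eLap_comp (contDiff_cexp_mul_ofReal _) hf,
    hlap, hgrad, deriv_deriv_cexp_mul_ofReal, hc]
  simp only [zero_smul, zero_add, Complex.real_smul]
  push_cast
  ring

/-- Proposition 5.2 (Euclidean case): a conservative geodesic gradient field `u = ∇f`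
(`Δf = 0`, `‖∇f‖² = m²`) yields a solution `ψ = e^{i f/ℏ}` of the Klein-Gordon equation
`Δψ + (m²/ℏ²) ψ = 0`. -/
theorem kleinGordon_of_conservative_geodesic {n : ℕ}
    (f : EuclideanSpace ℝ (Fin n) → ℝ) (hf : ContDiff ℝ 2 f)
    (ℏ m2 : ℝ) (hℏ : ℏ ≠ 0)
    (hlap : ∀ x, eLap f x = 0)
    (hgrad : ∀ x, ‖gradient f x‖ ^ 2 = m2)
    (x : EuclideanSpace ℝ (Fin n)) :
    eLap (fun y => Complex.exp (Complex.I * (f y : ℂ) / (ℏ : ℂ))) x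
      + ((m2 / ℏ ^ 2 : ℝ) : ℂ) * Complex.exp (Complex.I * (f x : ℂ) / (ℏ : ℂ)) = 0 :=
  kleinGordon_of_conservative_geodesic_general f hf ℏ m2 hlap hgrad x
end

section
/- Let E = EuclideanSpace ℝ (Fin n), let A : E → E be continuously differentiable with div A(x) = 0 for all x (Lorentz gauge), let f : E → ℝ be twice continuously differentiable with Δf(x) = 0 for all x, let ℏ ≠ 0 and m² be real constants, and suppose ‖∇f(x) − A(x)‖² = m² for all x. Then ψ = (fun x => Complex.exp (Complex.I * f x / ℏ)) satisfies the coupled Klein–Gordon equation Δψ(x) − (2·Complex.I/ℏ) * (fderiv ℝ ψ x (A x)) + (1/ℏ²) * (m² − ‖A(x)‖²) * ψ(x) = 0 for all x. (Paper's Theorem 6.1, Euclidean metric case: a Lagrangian solution u = ∇f − A of the Lorentz-force Newton equation yields the Klein–Gordon equation coupled to the potential A.) -/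
/-- The divergence of a vector field on `EuclideanSpace ℝ (Fin n)`: the trace of its
total derivative. -/
noncomputable def eDiv {n : ℕ}
    (v : EuclideanSpace ℝ (Fin n) → EuclideanSpace ℝ (Fin n))
    (x : EuclideanSpace ℝ (Fin n)) : ℝ :=
  LinearMap.trace ℝ _ (fderiv ℝ v x).toLinearMap

section CexpMulOfReal

variable {E : Type*} [NormedAddCommGroup E] [NormedSpace ℝ E] {f : E → ℝ} (c : ℂ)

theorem hasFDerivAt_cexp_mul_ofReal {x : E} (hf : DifferentiableAt ℝ f x) :
    HasFDerivAt (fun y => Complex.exp (c * f y))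
      (Complex.exp (c * f x) • c • Complex.ofRealCLM.comp (fderiv ℝ f x)) x :=
  ((Complex.ofRealCLM.hasFDerivAt.comp x hf.hasFDerivAt).const_mul c).cexp

theorem fderiv_cexp_mul_ofReal_apply {x : E} (hf : DifferentiableAt ℝ f x) (v : E) :
    fderiv ℝ (fun y => Complex.exp (c * f y)) x v
      = Complex.exp (c * f x) * (c * fderiv ℝ f x v) := by
  simp [(hasFDerivAt_cexp_mul_ofReal c hf).fderiv]

theorem fderiv_fderiv_cexp_mul_ofReal_apply (hf : ContDiff ℝ 2 f) (x v w : E) :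
    fderiv ℝ (fun y => fderiv ℝ (fun z => Complex.exp (c * f z)) y v) x w
      = Complex.exp (c * f x) * (c * fderiv ℝ (fun y => fderiv ℝ f y v) x w
          + c ^ 2 * fderiv ℝ f x v * fderiv ℝ f x w) := by
  have hf₁ : Differentiable ℝ f := hf.differentiable two_ne_zero
  have hf'v : DifferentiableAt ℝ (fun y => fderiv ℝ f y v) x :=
    ((hf.fderiv_right le_rfl).differentiable one_ne_zero x).clm_apply (differentiableAt_const v)
  have hψ' : (fun y => fderiv ℝ (fun z => Complex.exp (c * f z)) y v)
      = fun y => Complex.exp (c * f y) * (c * (fderiv ℝ f y v : ℂ)) :=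
    funext fun y => fderiv_cexp_mul_ofReal_apply c (hf₁ y) v
  have hprod : HasFDerivAt (fun y => Complex.exp (c * f y) * (c * (fderiv ℝ f y v : ℂ))) _ x :=
    (hasFDerivAt_cexp_mul_ofReal c (hf₁ x)).mul
      ((Complex.ofRealCLM.hasFDerivAt.comp x hf'v.hasFDerivAt).const_mul c)
  rw [hψ', hprod.fderiv]
  simp only [add_apply, smul_apply, smul_eq_mul,
    ContinuousLinearMap.coe_comp, Function.comp_apply, Complex.ofRealCLM_apply]
  ring

end CexpMulOfReal

theorem sum_sq_fderiv_single_eq_norm_gradient_sq {n : ℕ}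
    (f : EuclideanSpace ℝ (Fin n) → ℝ) (x : EuclideanSpace ℝ (Fin n)) :
    ∑ i, fderiv ℝ f x (EuclideanSpace.single i 1) ^ 2 = ‖gradient f x‖ ^ 2 := by
  rw [← real_inner_self_eq_norm_sq, PiLp.inner_apply]
  refine Finset.sum_congr rfl fun i _ => ?_
  have h := InnerProductSpace.toDual_symm_apply (𝕜 := ℝ) (x := EuclideanSpace.single i (1 : ℝ))
    (y := fderiv ℝ f x)
  rw [EuclideanSpace.inner_single_right] at h
  simp_all [gradient, sq]

theorem eLap_cexp_mul_ofReal {n : ℕ} {f : EuclideanSpace ℝ (Fin n) → ℝ} (hf : ContDiff ℝ 2 f)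
    (c : ℂ) (x : EuclideanSpace ℝ (Fin n)) :
    eLap (fun y => Complex.exp (c * f y)) x
      = Complex.exp (c * f x) * (c * eLap f x + c ^ 2 * ((‖gradient f x‖ ^ 2 : ℝ) : ℂ)) := by
  simp only [eLap, fderiv_fderiv_cexp_mul_ofReal_apply c hf, ← Finset.mul_sum,
    Finset.sum_add_distrib]
  rw [← sum_sq_fderiv_single_eq_norm_gradient_sq]
  push_cast
  simp only [Finset.mul_sum, mul_assoc, sq]

theorem kleinGordon_coupled_general {n : ℕ}
    (A : EuclideanSpace ℝ (Fin n) → EuclideanSpace ℝ (Fin n))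
    (f : EuclideanSpace ℝ (Fin n) → ℝ) (hf : ContDiff ℝ 2 f)
    (hlap : ∀ x, eLap f x = 0)
    (ℏ m2 : ℝ)
    (hconst : ∀ x, ‖gradient f x - A x‖ ^ 2 = m2)
    (x : EuclideanSpace ℝ (Fin n)) :
    eLap (fun y => Complex.exp (Complex.I * (f y : ℂ) / (ℏ : ℂ))) x
      - (2 * Complex.I / (ℏ : ℂ)) *
          (fderiv ℝ (fun y => Complex.exp (Complex.I * (f y : ℂ) / (ℏ : ℂ))) x (A x))
      + (1 / (ℏ : ℂ) ^ 2) * ((m2 : ℂ) - ((‖A x‖ ^ 2 : ℝ) : ℂ)) *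
          Complex.exp (Complex.I * (f x : ℂ) / (ℏ : ℂ)) = 0 := by
  set c : ℂ := Complex.I / ℏ
  have hψ : (fun y => Complex.exp (Complex.I * (f y : ℂ) / ℏ)) = fun y => Complex.exp (c * f y) :=
    funext fun y => by rw [div_mul_eq_mul_div]
  have hgrad : fderiv ℝ f x (A x) = inner ℝ (gradient f x) (A x) := by
    simp [gradient]
  have hm2 : m2 = ‖gradient f x‖ ^ 2 - 2 * inner ℝ (gradient f x) (A x) + ‖A x‖ ^ 2 := by
    rw [← hconst x, norm_sub_sq_real]
  -- `1 / ℏ ^ 2 = -c ^ 2` holds even for `ℏ = 0`, where both sides vanish.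
  have hc : 1 / (ℏ : ℂ) ^ 2 = -c ^ 2 := by
    simp only [c, div_pow, Complex.I_sq]; ring
  rw [hψ, congrFun hψ x, mul_div_assoc, eLap_cexp_mul_ofReal hf,
    fderiv_cexp_mul_ofReal_apply c (hf.differentiable two_ne_zero x), hlap, hc, hgrad, hm2]
  push_cast
  ring

/-- Theorem 6.1 (Euclidean case): if `A` is a C¹ potential in the Lorentz gauge
(`div A = 0`), `f` is C² with `Δf = 0`, and the Lagrangian solution `u = ∇f - A` has
constant squared length `m²`, then `ψ = e^{i f/ℏ}` satisfies the coupled Klein-Gordon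
equation `Δψ - (2i/ℏ) A(ψ) + (1/ℏ²)(m² - ‖A‖²) ψ = 0`. -/
theorem kleinGordon_coupled {n : ℕ}
    (A : EuclideanSpace ℝ (Fin n) → EuclideanSpace ℝ (Fin n)) (hA : ContDiff ℝ 1 A)
    (hgauge : ∀ x, eDiv A x = 0)
    (f : EuclideanSpace ℝ (Fin n) → ℝ) (hf : ContDiff ℝ 2 f)
    (hlap : ∀ x, eLap f x = 0)
    (ℏ m2 : ℝ) (hℏ : ℏ ≠ 0)
    (hconst : ∀ x, ‖gradient f x - A x‖ ^ 2 = m2)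
    (x : EuclideanSpace ℝ (Fin n)) :
    eLap (fun y => Complex.exp (Complex.I * (f y : ℂ) / (ℏ : ℂ))) x
      - (2 * Complex.I / (ℏ : ℂ)) *
          (fderiv ℝ (fun y => Complex.exp (Complex.I * (f y : ℂ) / (ℏ : ℂ))) x (A x))
      + (1 / (ℏ : ℂ) ^ 2) * ((m2 : ℂ) - ((‖A x‖ ^ 2 : ℝ) : ℂ)) *
          Complex.exp (Complex.I * (f x : ℂ) / (ℏ : ℂ)) = 0 :=
  kleinGordon_coupled_general A f hf hlap ℏ m2 hconst x
end

section
/- Fix ε : Fin n → ℝ with ε i = 1 or ε i = −1 for every i. Let A : EuclideanSpace ℝ (Fin n) → (Fin n → ℝ) be a continuously differentiable family of covector components with ∑ᵢ ε i * ∂ᵢ(Aᵢ)(x) = 0 for all x (Lorentz gauge), let f be twice continuously differentiable with Δ_ε f(x) = 0 for all x, let ℏ ≠ 0 and m² be real constants, and suppose ∑ᵢ ε i * (∂ᵢ f(x) − Aᵢ(x))² = m² for all x. Then ψ = (fun x => Complex.exp (Complex.I * f x / ℏ)) satisfies Δ_ε ψ(x) − (2·Complex.I/ℏ) * ∑ᵢ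 ε i * Aᵢ(x) * ∂ᵢψ(x) + (1/ℏ²) * (m² − ∑ᵢ ε i * Aᵢ(x)²) * ψ(x) = 0 for all x. (Paper's Theorem 6.1 for a diagonal pseudo-Euclidean metric of arbitrary signature.) -/
/-!
With `c = i/ℏ` and `ψ = exp (c f)`, the chain rule gives `∂ᵢψ = c ψ ∂ᵢf` and
`Δ_ε ψ = ψ (c² ∑ εᵢ (∂ᵢf)² + c Δ_ε f) = c² ψ ∑ εᵢ (∂ᵢf)²` since `f` is harmonic.
Expanding the eikonal identity, `m² - ∑ εᵢ Aᵢ² = ∑ εᵢ (∂ᵢf)² - 2 ∑ εᵢ Aᵢ ∂ᵢf`, and since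
`1/ℏ² = -c²` the three terms of the equation cancel.
-/

/-- The pseudo-Laplacian on `EuclideanSpace ℝ (Fin n)` for the diagonal pseudo-Euclidean
metric with signs `ε`: `Δ_ε g (x) = ∑ i, ε i • (second derivative of g along eᵢ at x)`. -/
noncomputable def pLap {n : ℕ} {V : Type*} [NormedAddCommGroup V] [NormedSpace ℝ V]
    (ε : Fin n → ℝ) (g : EuclideanSpace ℝ (Fin n) → V) (x : EuclideanSpace ℝ (Fin n)) : V :=
  ∑ i, ε i •
    fderiv ℝ (fun y => fderiv ℝ g y (EuclideanSpace.single i 1)) x (EuclideanSpace.single i 1)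

section PlaneWave

variable {E : Type*} [NormedAddCommGroup E] [NormedSpace ℝ E] {f : E → ℝ} {x : E}

theorem hasFDerivAt_cexp_const_mul_ofReal (hf : DifferentiableAt ℝ f x) (c : ℂ) :
    HasFDerivAt (fun y => Complex.exp (c * f y))
      (Complex.exp (c * f x) • c • Complex.ofRealCLM.comp (fderiv ℝ f x)) x :=
  ((Complex.ofRealCLM.hasFDerivAt.comp x hf.hasFDerivAt).const_mul c).cexp

theorem fderiv_cexp_const_mul_ofReal_apply (hf : DifferentiableAt ℝ f x) (c : ℂ) (v : E) :
    fderiv ℝ (fun y => Complex.exp (c * f y)) x v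
      = Complex.exp (c * f x) * (c * fderiv ℝ f x v) := by
  simp [(hasFDerivAt_cexp_const_mul_ofReal hf c).fderiv]

theorem fderiv_fderiv_cexp_const_mul_ofReal_apply (hf : ContDiff ℝ 2 f) (c : ℂ) (x v : E) :
    fderiv ℝ (fun y => fderiv ℝ (fun z => Complex.exp (c * f z)) y v) x v
      = Complex.exp (c * f x) *
          (c ^ 2 * (fderiv ℝ f x v) ^ 2 + c * fderiv ℝ (fun y => fderiv ℝ f y v) x v) := by
  have hf1 : Differentiable ℝ f := hf.differentiable two_ne_zero
  have hdf : DifferentiableAt ℝ (fun y => fderiv ℝ f y v) x :=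
    ((hf.fderiv_right le_rfl).clm_apply contDiff_const).differentiable one_ne_zero x
  have hdψ : (fun y => fderiv ℝ (fun z => Complex.exp (c * f z)) y v)
      = fun y => Complex.exp (c * f y) * (c * fderiv ℝ f y v) :=
    funext fun y => fderiv_cexp_const_mul_ofReal_apply (hf1 y) c v
  have hprod : HasFDerivAt (fun y => Complex.exp (c * f y) * (c * fderiv ℝ f y v)) _ x :=
    (hasFDerivAt_cexp_const_mul_ofReal (hf1 x) c).mul
    ((Complex.ofRealCLM.hasFDerivAt.comp x hdf.hasFDerivAt).const_mul c)
  rw [hdψ, hprod.fderiv]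
  simp only [add_apply, smul_apply, ContinuousLinearMap.coe_comp, Function.comp_apply,
    Complex.ofRealCLM_apply, smul_eq_mul]
  ring

end PlaneWave

theorem pLap_cexp_const_mul_ofReal {n : ℕ} (ε : Fin n → ℝ) {f : EuclideanSpace ℝ (Fin n) → ℝ}
    (hf : ContDiff ℝ 2 f) (c : ℂ) (x : EuclideanSpace ℝ (Fin n)) :
    pLap ε (fun y => Complex.exp (c * f y)) x
      = Complex.exp (c * f x) * (c ^ 2 *
          ((∑ i, ε i * (fderiv ℝ f x (EuclideanSpace.single i 1)) ^ 2 : ℝ) : ℂ)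
          + c * ((pLap ε f x : ℝ) : ℂ)) := by
  simp only [pLap, fderiv_fderiv_cexp_const_mul_ofReal_apply hf, Complex.real_smul, smul_eq_mul]
  push_cast
  simp only [mul_add, Finset.mul_sum, Finset.sum_add_distrib]
  congr 1 <;> refine Finset.sum_congr rfl fun i _ => by ring

theorem kleinGordon_coupled_pseudo_general {n : ℕ} (ε : Fin n → ℝ)
    (A : EuclideanSpace ℝ (Fin n) → (Fin n → ℝ))
    (f : EuclideanSpace ℝ (Fin n) → ℝ) (hf : ContDiff ℝ 2 f)
    (hlap : ∀ x, pLap ε f x = 0)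
    (ℏ m2 : ℝ)
    (hconst : ∀ x, ∑ i, ε i *
      (fderiv ℝ f x (EuclideanSpace.single i 1) - A x i) ^ 2 = m2)
    (x : EuclideanSpace ℝ (Fin n)) :
    pLap ε (fun y => Complex.exp (Complex.I * (f y : ℂ) / (ℏ : ℂ))) x
      - (2 * Complex.I / (ℏ : ℂ)) *
          ∑ i, ((ε i : ℝ) : ℂ) * ((A x i : ℝ) : ℂ) *
            (fderiv ℝ (fun y => Complex.exp (Complex.I * (f y : ℂ) / (ℏ : ℂ))) x
              (EuclideanSpace.single i 1))
      + (1 / (ℏ : ℂ) ^ 2) * ((m2 : ℂ) - ((∑ i, ε i * (A x i) ^ 2 : ℝ) : ℂ)) *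
          Complex.exp (Complex.I * (f x : ℂ) / (ℏ : ℂ)) = 0 := by
  set c : ℂ := Complex.I / ℏ
  set g : Fin n → ℝ := fun i => fderiv ℝ f x (EuclideanSpace.single i 1)
  have hψ : (fun y => Complex.exp (Complex.I * f y / ℏ)) = fun y => Complex.exp (c * f y) := by
    simp_rw [c, mul_div_right_comm]
  have hm2_expand : m2 = ∑ i, ε i * g i ^ 2 - 2 * ∑ i, ε i * A x i * g i + ∑ i, ε i * A x i ^ 2 := by
    rw [← hconst x, Finset.mul_sum, ← Finset.sum_sub_distrib, ← Finset.sum_add_distrib]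
    exact Finset.sum_congr rfl fun i _ => by ring
  have hcoupling : ∑ i, (ε i : ℂ) * (A x i : ℂ) * (Complex.exp (c * f x) * (c * g i))
      = Complex.exp (c * f x) * c * ((∑ i, ε i * A x i * g i : ℝ) : ℂ) := by
    push_cast
    rw [Finset.mul_sum]
    exact Finset.sum_congr rfl fun i _ => by ring
  have hc2 : 1 / (ℏ : ℂ) ^ 2 = -c ^ 2 := by
    simp only [c, div_pow, Complex.I_sq]
    ring
  have h2c : 2 * Complex.I / (ℏ : ℂ) = 2 * c := mul_div_assoc _ _ _
  have hψx : Complex.exp (Complex.I * f x / ℏ) = Complex.exp (c * f x) := congrFun hψ x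
  simp only [hψ, hψx, pLap_cexp_const_mul_ofReal ε hf, hlap x,
    fderiv_cexp_const_mul_ofReal_apply (hf.differentiable two_ne_zero x)]
  rw [hcoupling, h2c, hc2, hm2_expand]
  push_cast
  ring

/-- Theorem 6.1 for a diagonal pseudo-Euclidean metric of arbitrary signature: if the
covector field `A` is C¹ and in the Lorentz gauge `∑ i, ε i ∂ᵢ Aᵢ = 0`, `f` is C² with
`Δ_ε f = 0`, and `∑ i, ε i (∂ᵢ f - Aᵢ)² = m²`, then `ψ = e^{i f/ℏ}` satisfies
`Δ_ε ψ - (2i/ℏ) ∑ i, ε i Aᵢ ∂ᵢψ + (1/ℏ²)(m² - ∑ i, ε i Aᵢ²) ψ = 0`. -/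
theorem kleinGordon_coupled_pseudo {n : ℕ} (ε : Fin n → ℝ)
    (hε : ∀ i, ε i = 1 ∨ ε i = -1)
    (A : EuclideanSpace ℝ (Fin n) → (Fin n → ℝ)) (hA : ContDiff ℝ 1 A)
    (hgauge : ∀ x, ∑ i, ε i *
      fderiv ℝ (fun y => A y i) x (EuclideanSpace.single i 1) = 0)
    (f : EuclideanSpace ℝ (Fin n) → ℝ) (hf : ContDiff ℝ 2 f)
    (hlap : ∀ x, pLap ε f x = 0)
    (ℏ m2 : ℝ) (hℏ : ℏ ≠ 0)
    (hconst : ∀ x, ∑ i, ε i *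
      (fderiv ℝ f x (EuclideanSpace.single i 1) - A x i) ^ 2 = m2)
    (x : EuclideanSpace ℝ (Fin n)) :
    pLap ε (fun y => Complex.exp (Complex.I * (f y : ℂ) / (ℏ : ℂ))) x
      - (2 * Complex.I / (ℏ : ℂ)) *
          ∑ i, ((ε i : ℝ) : ℂ) * ((A x i : ℝ) : ℂ) *
            (fderiv ℝ (fun y => Complex.exp (Complex.I * (f y : ℂ) / (ℏ : ℂ))) x
              (EuclideanSpace.single i 1))
      + (1 / (ℏ : ℂ) ^ 2) * ((m2 : ℂ) - ((∑ i, ε i * (A x i) ^ 2 : ℝ) : ℂ)) *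
          Complex.exp (Complex.I * (f x : ℂ) / (ℏ : ℂ)) = 0 :=
  kleinGordon_coupled_pseudo_general ε A f hf hlap ℏ m2 hconst x
end

section
/- Let E = EuclideanSpace ℝ (Fin n), let f : E → ℝ be twice continuously differentiable, let A : E → E be differentiable, and set u = (fun x => ∇f(x) − A(x)). Suppose u satisfies the Lorentz-force Newton equation: for all x, (fderiv ℝ u x) (u x) = (fderiv ℝ A x).adjoint (u x) − (fderiv ℝ A x) (u x). Then the kinetic energy is constant: there exists a real constant c such that ‖u(x)‖² = c for all x. (Paper's Lemma of Section 4: Lagrangian solutions of the Lorentz equation have constant kinetic energy; Euclidean metric case.) -/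
/-!
Write `u = ∇f - A`, so that `Du + DA = D(∇f)` is the Hessian of `f`, a self-adjoint operator.
Newton's equation says `(Du + DA) u = DA* u`, hence `Du* u = (Du + DA) u - DA* u = 0`.
But `Du* u` is half the gradient of `‖u‖²`, which is therefore constant.
-/

open InnerProductSpace ContinuousLinearMap

section LinearAlgebra

variable {𝕜 E : Type*} [RCLike 𝕜] [NormedAddCommGroup E] [InnerProductSpace 𝕜 E] [CompleteSpace E]

theorem ContinuousLinearMap.adjoint_apply_eq_zero_of_isSelfAdjoint_add {L M : E →L[𝕜] E}
    (hLM : IsSelfAdjoint (L + M)) {w : E} (h : L w = M.adjoint w - M w) : L.adjoint w = 0 := by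
  have hL : L.adjoint = (L + M) - M.adjoint := by
    rw [← hLM.adjoint_eq, map_add, add_sub_cancel_right]
  rw [hL, sub_apply, add_apply, h, sub_add_cancel, sub_self]

end LinearAlgebra

section Calculus

variable {E : Type*} [NormedAddCommGroup E] [InnerProductSpace ℝ E] [CompleteSpace E]

theorem hasFDerivAt_gradient {f : E → ℝ} {x : E} (hf : DifferentiableAt ℝ (fderiv ℝ f) x) :
    HasFDerivAt (gradient f)
      ((toDual ℝ E).symm.toContinuousLinearEquiv.toContinuousLinearMap ∘L
        fderiv ℝ (fderiv ℝ f) x) x :=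
  (toDual ℝ E).symm.toContinuousLinearEquiv.hasFDerivAt.comp x hf.hasFDerivAt

theorem IsSymmSndFDerivAt.isSelfAdjoint_fderiv_gradient {f : E → ℝ} {x : E}
    (hf : DifferentiableAt ℝ (fderiv ℝ f) x) (hsymm : IsSymmSndFDerivAt ℝ f x) :
    IsSelfAdjoint (fderiv ℝ (gradient f) x) := by
  refine isSelfAdjoint_iff_isSymmetric.mpr fun v w => ?_
  rw [(hasFDerivAt_gradient hf).fderiv]
  change ⟪(toDual ℝ E).symm _, w⟫_ℝ = ⟪v, (toDual ℝ E).symm _⟫_ℝ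
  rw [toDual_symm_apply, real_inner_comm, toDual_symm_apply]
  exact hsymm v w

variable {F : Type*} [NormedAddCommGroup F] [InnerProductSpace ℝ F] [CompleteSpace F]

theorem exists_norm_sq_eq_of_adjoint_fderiv_apply_self_eq_zero {u : E → F}
    (hu : Differentiable ℝ u) (h : ∀ x, (fderiv ℝ u x).adjoint (u x) = 0) :
    ∃ c : ℝ, ∀ x, ‖u x‖ ^ 2 = c := by
  have hderiv : ∀ x, fderiv ℝ (‖u ·‖ ^ 2) x = 0 := fun x => by
    ext v
    simp [(hu x).hasFDerivAt.norm_sq.fderiv, ← adjoint_inner_left, h x]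
  exact ⟨‖u 0‖ ^ 2, fun x =>
    is_const_of_fderiv_eq_zero (fun y => (hu y).hasFDerivAt.norm_sq.differentiableAt) hderiv x 0⟩

end Calculus

/-- Lemma of Section 4 (Euclidean case): a Lagrangian solution `u = ∇f - A` of the
Lorentz-force Newton equation has constant kinetic energy: `‖u‖²` is constant. -/
theorem lagrangian_solution_constant_kinetic_energy {n : ℕ}
    (f : EuclideanSpace ℝ (Fin n) → ℝ) (hf : ContDiff ℝ 2 f)
    (A : EuclideanSpace ℝ (Fin n) → EuclideanSpace ℝ (Fin n)) (hA : Differentiable ℝ A)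
    (u : EuclideanSpace ℝ (Fin n) → EuclideanSpace ℝ (Fin n))
    (hu : ∀ x, u x = gradient f x - A x)
    (hNewton : ∀ x, (fderiv ℝ u x) (u x) =
      (fderiv ℝ A x).adjoint (u x) - (fderiv ℝ A x) (u x)) :
    ∃ c : ℝ, ∀ x, ‖u x‖ ^ 2 = c := by
  have hdf : Differentiable ℝ (fderiv ℝ f) :=
    (hf.fderiv_right (m := 1) le_rfl).differentiable one_ne_zero
  have hgrad : Differentiable ℝ (gradient f) :=
    fun x => (hasFDerivAt_gradient (hdf x)).differentiableAt
  have hu_eq : u = gradient f - A := funext hu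
  have hu_diff : Differentiable ℝ u := hu_eq ▸ hgrad.sub hA
  refine exists_norm_sq_eq_of_adjoint_fderiv_apply_self_eq_zero hu_diff fun x => ?_
  have hsum : fderiv ℝ u x + fderiv ℝ A x = fderiv ℝ (gradient f) x := by
    rw [← fderiv_add (hu_diff x) (hA x), hu_eq, sub_add_cancel]
  have hhess : IsSelfAdjoint (fderiv ℝ (gradient f) x) :=
    (hf.contDiffAt.isSymmSndFDerivAt (by simp)).isSelfAdjoint_fderiv_gradient (hdf x)
  exact adjoint_apply_eq_zero_of_isSelfAdjoint_add (hsum ▸ hhess) (hNewton x)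
end

section
/- Let E = EuclideanSpace ℝ (Fin n), let A : E → E be differentiable, and let u : E → E be a differentiable vector field satisfying the Lorentz-force Newton equation: for all x, (fderiv ℝ u x) (u x) = (fderiv ℝ A x).adjoint (u x) − (fderiv ℝ A x) (u x). Then the kinetic energy T(u) = (fun x => ‖u(x)‖²/2) is a first integral of u: for all x, fderiv ℝ (fun x => ‖u(x)‖²/2) x (u x) = 0. (Claim following equation (9) in Section 4: the kinetic energy is a first integral of any field solution of the Lorentz equation.) -/
open scoped InnerProductSpace

theorem ContinuousLinearMap.inner_adjoint_sub_self_apply_self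
    {E : Type*} [NormedAddCommGroup E] [InnerProductSpace ℝ E] [CompleteSpace E]
    (L : E →L[ℝ] E) (w : E) : ⟪L.adjoint w - L w, w⟫_ℝ = 0 := by
  rw [inner_sub_left, ContinuousLinearMap.adjoint_inner_left, real_inner_comm, sub_self]

theorem fderiv_norm_sq_div_two_apply
    {G F : Type*} [NormedAddCommGroup G] [NormedSpace ℝ G]
    [NormedAddCommGroup F] [InnerProductSpace ℝ F] {f : G → F} {x : G}
    (hf : DifferentiableAt ℝ f x) (v : G) :
    fderiv ℝ (fun y => ‖f y‖ ^ 2 / 2) x v = ⟪fderiv ℝ f x v, f x⟫_ℝ := by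
  simp_rw [div_eq_mul_inv]
  rw [(hf.hasFDerivAt.norm_sq.mul_const 2⁻¹).fderiv]
  simp [real_inner_comm]

theorem kinetic_energy_first_integral_general {n : ℕ}
    (A : EuclideanSpace ℝ (Fin n) → EuclideanSpace ℝ (Fin n))
    (u : EuclideanSpace ℝ (Fin n) → EuclideanSpace ℝ (Fin n)) (hu : Differentiable ℝ u)
    (hNewton : ∀ x, (fderiv ℝ u x) (u x) =
      (fderiv ℝ A x).adjoint (u x) - (fderiv ℝ A x) (u x)) :
    ∀ x, fderiv ℝ (fun y => ‖u y‖ ^ 2 / 2) x (u x) = 0 := by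
  intro x
  rw [fderiv_norm_sq_div_two_apply (hu x), hNewton,
    ContinuousLinearMap.inner_adjoint_sub_self_apply_self]

/-- Section 4, claim following equation (9): for a field solution `u` of the Lorentz-force
Newton equation, the kinetic energy `T(u) = ‖u‖²/2` is a first integral of `u`. -/
theorem kinetic_energy_first_integral {n : ℕ}
    (A : EuclideanSpace ℝ (Fin n) → EuclideanSpace ℝ (Fin n)) (hA : Differentiable ℝ A)
    (u : EuclideanSpace ℝ (Fin n) → EuclideanSpace ℝ (Fin n)) (hu : Differentiable ℝ u)
    (hNewton : ∀ x, (fderiv ℝ u x) (u x) =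
      (fderiv ℝ A x).adjoint (u x) - (fderiv ℝ A x) (u x)) :
    ∀ x, fderiv ℝ (fun y => ‖u y‖ ^ 2 / 2) x (u x) = 0 :=
  kinetic_energy_first_integral_general A u hu hNewton
end

section
/- Let E = EuclideanSpace ℝ (Fin n), let F : E → E → E be a map, and let u : E → E be a continuously differentiable vector field (ContDiff ℝ 1 u). Suppose that every integral curve of u solves Newton's equation: for every γ : ℝ → E, every t₀ ∈ ℝ and every open interval I containing t₀, if HasDerivAt γ (u (γ t)) t for all t ∈ I, then HasDerivAt (fun s => u (γ s)) (F (γ t₀) (u (γ t₀))) t₀. Then (fderiv ℝ u x) (u x) = F x (u x) for all x ∈ E. (The 'only if' direction of the Proposition of Section 3, flat-space case: a field solution satisfies condition (7), D_{u_x} = u_* u_x, at every point; the proof uses local existence of integral curves of the C¹ field u through every point.) -/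
/-! The acceleration of an integral curve `γ` of `u` is `(u ∘ γ)' = Du(γ) γ' = Du(γ) u(γ)` by the
chain rule. Since a `C¹` field has an integral curve through every point (Picard–Lindelöf), the
hypothesis applied to that curve identifies `Du(x) u(x)` with `F(x, u(x))` by uniqueness of
derivatives. -/

open Set

theorem ContDiffAt.exists_integralCurve_hasDerivAt_comp {E : Type*} [NormedAddCommGroup E]
    [NormedSpace ℝ E] [CompleteSpace E] {u : E → E} {x : E} (hu : ContDiffAt ℝ 1 u x) :
    ∃ γ : ℝ → E, γ 0 = x ∧ ∃ ε > (0 : ℝ), (∀ t ∈ Ioo (-ε) ε, HasDerivAt γ (u (γ t)) t) ∧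
      HasDerivAt (fun s => u (γ s)) (fderiv ℝ u x (u x)) 0 := by
  obtain ⟨γ, hγ0, ε, hε, hγ⟩ :=
    hu.exists_forall_mem_closedBall_exists_eq_forall_mem_Ioo_hasDerivAt₀ 0
  simp only [zero_sub, zero_add] at hγ
  have hγ'0 : HasDerivAt γ (u x) 0 := hγ0 ▸ hγ 0 ⟨by linarith, hε⟩
  have hu' : HasFDerivAt u (fderiv ℝ u x) (γ 0) :=
    hγ0 ▸ (hu.differentiableAt one_ne_zero).hasFDerivAt
  exact ⟨γ, hγ0, ε, hε, hγ, hu'.comp_hasDerivAt 0 hγ'0⟩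

/-- The 'only if' direction of the Proposition of Section 3 (flat-space case): if every
integral curve of the C¹ vector field `u` (on any open interval) solves Newton's equation
`x'' = F(x, x')`, then `(fderiv u) u = F(x, u)` at every point. -/
theorem condition_of_intermediate_integral {n : ℕ}
    (F : EuclideanSpace ℝ (Fin n) → EuclideanSpace ℝ (Fin n) → EuclideanSpace ℝ (Fin n))
    (u : EuclideanSpace ℝ (Fin n) → EuclideanSpace ℝ (Fin n)) (hu : ContDiff ℝ 1 u)
    (h : ∀ γ : ℝ → EuclideanSpace ℝ (Fin n), ∀ t₀ a b : ℝ, t₀ ∈ Set.Ioo a b →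
      (∀ t ∈ Set.Ioo a b, HasDerivAt γ (u (γ t)) t) →
      HasDerivAt (fun s => u (γ s)) (F (γ t₀) (u (γ t₀))) t₀) :
    ∀ x, (fderiv ℝ u x) (u x) = F x (u x) := by
  intro x
  obtain ⟨γ, hγ0, ε, hε, hγ, hchain⟩ := hu.contDiffAt.exists_integralCurve_hasDerivAt_comp
  have hnewton := h γ 0 (-ε) ε ⟨by linarith, hε⟩ hγ
  rw [hγ0] at hnewton
  exact hchain.unique hnewton
end
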